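/- arXiv:0812.4761 — 2 statements merged into one kernel-verified Lean document; each statement's English description precedes it below -/
import Mathlib

section
/- Let 𝒳 be a locally convex Hausdorff real topological vector space with topological dual 𝒳*. If f : 𝒳 → (−∞, +∞] is convex and lower semi-continuous, then for every x ∈ 𝒳 one has f(x) = sup { u(x) − f*(u) : u ∈ 𝒳* }, where f*(u) = sup { u(y) − f(y) : y ∈ 𝒳 } is the Legendre–Fenchel transform of f. -/
/-!
Strictly separate a point `(x, r)` with `r < f x` from the closed convex epigraph of `f` in
`𝒳 × ℝ` by a continuous functional `(y, t) ↦ u y + α t`. Since the epigraph is closed upwards,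
`α ≥ 0` as soon as `f` is somewhere finite. If `α > 0` the separating hyperplane is the graph of a
continuous affine minorant of `f` exceeding `r` at `x`. If `α = 0` (which can only happen when
`f x = ⊤`), adding a large multiple of `c - u` to an affine minorant obtained at a point of the
domain gives such a minorant. Every affine minorant `u - c` has `f* u ≤ c`, so `f x` is the
supremum of `u x - f* u`; the reverse inequality is the Fenchel–Young inequality.
-/

section Separation

variable {E : Type*} [AddCommGroup E] [Module ℝ E] [TopologicalSpace E] [IsTopologicalAddGroup E]
  [ContinuousSMul ℝ E] [LocallyConvexSpace ℝ E]

theorem geometric_hahn_banach_point_closed_prod {S : Set (E × ℝ)} (hS : Convex ℝ S)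
    (hS' : IsClosed S) {x : E} {r : ℝ} (hxr : (x, r) ∉ S) :
    ∃ (u : StrongDual ℝ E) (α c : ℝ), u x + α * r < c ∧ ∀ p ∈ S, c < u p.1 + α * p.2 := by
  obtain ⟨φ, c, hφx, hφS⟩ := geometric_hahn_banach_point_closed hS hS' hxr
  have hφ (p : E × ℝ) : φ p = φ (p.1, 0) + φ (0, 1) * p.2 := by
    rw [mul_comm, ← smul_eq_mul, ← map_smul, ← map_add]; simp
  refine ⟨φ.comp (.inl ℝ E ℝ), φ (0, 1), c, ?_, fun p hp => ?_⟩
  · simpa [hφ (x, r)] using hφx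
  · simpa [hφ p] using hφS p hp

end Separation

section Epigraph

variable {E : Type*} {f : E → EReal}

def realEpigraph (f : E → EReal) : Set (E × ℝ) := {p | f p.1 ≤ p.2}

theorem LowerSemicontinuous.isClosed_realEpigraph [TopologicalSpace E]
    (hf : LowerSemicontinuous f) : IsClosed (realEpigraph f) :=
  hf.isClosed_epigraph.preimage <|
    continuous_fst.prodMk (continuous_coe_real_ereal.comp continuous_snd)

variable [AddCommGroup E] [Module ℝ E]

theorem convex_realEpigraph
    (hconv : ∀ x y : E, ∀ a b : ℝ, 0 ≤ a → 0 ≤ b → a + b = 1 →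
      f (a • x + b • y) ≤ (a : EReal) * f x + (b : EReal) * f y) :
    Convex ℝ (realEpigraph f) := by
  rintro ⟨y, t⟩ (hy : f y ≤ t) ⟨z, s⟩ (hz : f z ≤ s) a b ha hb hab
  calc f (a • y + b • z) ≤ (a : EReal) * f y + (b : EReal) * f z := hconv y z a b ha hb hab
    _ ≤ (a : EReal) * t + (b : EReal) * s := by
      have ha' : (0 : EReal) ≤ a := by exact_mod_cast ha
      have hb' : (0 : EReal) ≤ b := by exact_mod_cast hb
      gcongr
    _ = (a * t + b * s : ℝ) := by norm_cast

variable [TopologicalSpace E]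

noncomputable def fenchelConjugate (f : E → EReal) (u : StrongDual ℝ E) : EReal :=
  ⨆ y, (u y : EReal) - f y

def IsAffineMinorant (f : E → EReal) (u : StrongDual ℝ E) (c : ℝ) : Prop :=
  ∀ p ∈ realEpigraph f, u p.1 - c ≤ p.2

theorem sub_fenchelConjugate_le (f : E → EReal) (u : StrongDual ℝ E) (x : E) :
    (u x : EReal) - fenchelConjugate f u ≤ f x := by
  have hx : (u x : EReal) - f x ≤ fenchelConjugate f u := le_iSup (fun y => (u y : EReal) - f y) x
  induction hfx : f x using EReal.rec with
  | bot => rw [hfx, EReal.coe_sub_bot, top_le_iff] at hx; simp [hx]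
  | top => exact le_top
  | coe s =>
    rw [hfx] at hx
    exact EReal.sub_le_of_le_add'
      ((EReal.sub_le_iff_le_add (.inl (EReal.coe_ne_bot s)) (.inl (EReal.coe_ne_top s))).1 hx)

theorem fenchelConjugate_le_of_isAffineMinorant {u : StrongDual ℝ E} {c : ℝ}
    (h : IsAffineMinorant f u c) : fenchelConjugate f u ≤ c := by
  refine iSup_le fun y => ?_
  induction hfy : f y using EReal.rec with
  | bot =>
    have := h (y, u y - c - 1) (by simp [realEpigraph, hfy])
    linarith
  | top => simp
  | coe s =>
    have := h (y, s) (by simp [realEpigraph, hfy])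
    exact_mod_cast (by linarith : u y - s ≤ c)

theorem coe_lt_sub_fenchelConjugate {u : StrongDual ℝ E} {c r : ℝ} {x : E}
    (h : IsAffineMinorant f u c) (hr : r < u x - c) :
    (r : EReal) < u x - fenchelConjugate f u :=
  calc (r : EReal) < (u x : EReal) - c := by exact_mod_cast hr
    _ ≤ u x - fenchelConjugate f u :=
      EReal.sub_le_sub le_rfl (fenchelConjugate_le_of_isAffineMinorant h)

open ContinuousLinearMap in
theorem exists_isAffineMinorant_lt_of_separation {u : StrongDual ℝ E} {α c r : ℝ} {x : E}
    (hα : 0 < α) (hx : u x + α * r < c) (hsep : ∀ p ∈ realEpigraph f, c < u p.1 + α * p.2) :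
    ∃ (w : StrongDual ℝ E) (c' : ℝ), IsAffineMinorant f w c' ∧ r < w x - c' := by
  have hw (y : E) : (-α⁻¹ • u) y - -(c / α) = (c - u y) / α := by
    simp only [smul_apply, smul_eq_mul]; ring
  refine ⟨-α⁻¹ • u, -(c / α), fun p hp => ?_, ?_⟩
  · rw [hw, div_le_iff₀' hα]
    linarith [hsep p hp]
  · rw [hw, lt_div_iff₀' hα]
    linarith

open ContinuousLinearMap in
theorem exists_isAffineMinorant_lt_of_vertical_separation {u v : StrongDual ℝ E} {c cv r : ℝ}
    {x : E} (hv : IsAffineMinorant f v cv) (hx : u x < c)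
    (hsep : ∀ p ∈ realEpigraph f, c < u p.1) :
    ∃ (w : StrongDual ℝ E) (c' : ℝ), IsAffineMinorant f w c' ∧ r < w x - c' := by
  obtain ⟨n, hn⟩ := exists_nat_gt ((r - v x + cv) / (c - u x))
  rw [div_lt_iff₀ (sub_pos.2 hx)] at hn
  have hw (y : E) : (v - (n : ℝ) • u) y - (cv - n * c) = v y - cv - n * (u y - c) := by
    simp only [sub_apply, smul_apply, smul_eq_mul]; ring
  refine ⟨v - (n : ℝ) • u, cv - n * c, fun p hp => ?_, ?_⟩
  · rw [hw]
    nlinarith [hv p hp, mul_nonneg n.cast_nonneg (sub_nonneg.2 (hsep p hp).le)]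
  · rw [hw]
    linarith

theorem nonneg_of_forall_mem_realEpigraph_lt {u : StrongDual ℝ E} {α c : ℝ} {p : E × ℝ}
    (hp : p ∈ realEpigraph f) (hsep : ∀ q ∈ realEpigraph f, c < u q.1 + α * q.2) : 0 ≤ α := by
  by_contra! hα
  -- raising `p` by `d` brings `u p.1 + α * p.2` down to exactly `c`
  set d := (u p.1 + α * p.2 - c) / -α
  have hd : 0 ≤ d := div_nonneg (by linarith [hsep p hp]) (by linarith)
  have hαd : α * d = c - u p.1 - α * p.2 := by
    have := hα.ne
    simp only [d]; field_simp; ring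
  have hq : (p.1, p.2 + d) ∈ realEpigraph f :=
    (show f p.1 ≤ p.2 from hp).trans (by exact_mod_cast le_add_of_nonneg_right hd)
  have := hsep _ hq
  simp only [mul_add, hαd] at this
  linarith

section LocallyConvex

variable [IsTopologicalAddGroup E] [ContinuousSMul ℝ E] [LocallyConvexSpace ℝ E]

theorem exists_isAffineMinorant_lt_of_ne_top (hconv : Convex ℝ (realEpigraph f))
    (hclosed : IsClosed (realEpigraph f)) {x : E} {r : ℝ} (hx : f x ≠ ⊤) (hr : (r : EReal) < f x) :
    ∃ (w : StrongDual ℝ E) (c' : ℝ), IsAffineMinorant f w c' ∧ r < w x - c' := by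
  obtain ⟨u, α, c, hxr, hsep⟩ :=
    geometric_hahn_banach_point_closed_prod hconv hclosed (x := x) (r := r) hr.not_ge
  have hgraph : (x, (f x).toReal) ∈ realEpigraph f := EReal.le_coe_toReal hx
  have hrx : r < (f x).toReal := EReal.coe_lt_coe_iff.1 (hr.trans_le hgraph)
  have hα : 0 < α := by nlinarith [hsep _ hgraph]
  exact exists_isAffineMinorant_lt_of_separation hα hxr hsep

theorem exists_isAffineMinorant_lt (hne : ∀ x, f x ≠ ⊥) (hconv : Convex ℝ (realEpigraph f))
    (hclosed : IsClosed (realEpigraph f)) {x : E} {r : ℝ} (hr : (r : EReal) < f x) :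
    ∃ (w : StrongDual ℝ E) (c' : ℝ), IsAffineMinorant f w c' ∧ r < w x - c' := by
  by_cases! hdom : ∀ y, f y = ⊤
  · exact ⟨0, -r - 1, fun p hp => by simp [realEpigraph, hdom p.1] at hp, by simp⟩
  obtain ⟨x₀, hx₀⟩ := hdom
  obtain ⟨r₀, -, hr₀⟩ := EReal.exists_between_coe_real (bot_lt_iff_ne_bot.2 (hne x₀))
  obtain ⟨v, cv, hv, -⟩ := exists_isAffineMinorant_lt_of_ne_top hconv hclosed hx₀ hr₀
  obtain ⟨u, α, c, hxr, hsep⟩ :=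
    geometric_hahn_banach_point_closed_prod hconv hclosed (x := x) (r := r) hr.not_ge
  have hα : 0 ≤ α := nonneg_of_forall_mem_realEpigraph_lt
    (p := (x₀, (f x₀).toReal)) (EReal.le_coe_toReal hx₀) hsep
  rcases hα.lt_or_eq with hα | rfl
  · exact exists_isAffineMinorant_lt_of_separation hα hxr hsep
  · exact exists_isAffineMinorant_lt_of_vertical_separation hv (by simpa using hxr)
      (by simpa using hsep)

end LocallyConvex

end Epigraph

theorem stmt_1_general {𝒳 : Type*} [AddCommGroup 𝒳] [Module ℝ 𝒳] [TopologicalSpace 𝒳]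
    [IsTopologicalAddGroup 𝒳] [ContinuousSMul ℝ 𝒳] [LocallyConvexSpace ℝ 𝒳]
    (f : 𝒳 → EReal) (hne : ∀ x, f x ≠ ⊥)
    (hconv : ∀ x y : 𝒳, ∀ a b : ℝ, 0 ≤ a → 0 ≤ b → a + b = 1 →
      f (a • x + b • y) ≤ (a : EReal) * f x + (b : EReal) * f y)
    (hlsc : LowerSemicontinuous f) (x : 𝒳) :
    f x = ⨆ u : 𝒳 →L[ℝ] ℝ, ((u x : EReal) - ⨆ y : 𝒳, ((u y : EReal) - f y)) := by
  refine le_antisymm (EReal.ge_of_forall_gt_iff_ge.1 fun r hr => ?_)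
    (iSup_le (sub_fenchelConjugate_le f · x))
  obtain ⟨u, c, hu, hr⟩ := exists_isAffineMinorant_lt hne (convex_realEpigraph hconv)
    hlsc.isClosed_realEpigraph hr
  exact (coe_lt_sub_fenchelConjugate hu hr).le.trans
    (le_iSup (fun u : 𝒳 →L[ℝ] ℝ => (u x : EReal) - fenchelConjugate f u) u)

/-- Duality theorem: on a locally convex Hausdorff real topological vector
space `𝒳`, a convex lower semicontinuous `f : 𝒳 → (−∞, +∞]` satisfies
`f x = sup { u x − f*(u) : u ∈ 𝒳* }` where `f*` is the Legendre–Fenchel transform. -/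
theorem stmt_1 {𝒳 : Type*} [AddCommGroup 𝒳] [Module ℝ 𝒳] [TopologicalSpace 𝒳]
    [IsTopologicalAddGroup 𝒳] [ContinuousSMul ℝ 𝒳] [LocallyConvexSpace ℝ 𝒳] [T2Space 𝒳]
    (f : 𝒳 → EReal) (hne : ∀ x, f x ≠ ⊥)
    (hconv : ∀ x y : 𝒳, ∀ a b : ℝ, 0 ≤ a → 0 ≤ b → a + b = 1 →
      f (a • x + b • y) ≤ (a : EReal) * f x + (b : EReal) * f y)
    (hlsc : LowerSemicontinuous f) (x : 𝒳) :
    f x = ⨆ u : 𝒳 →L[ℝ] ℝ, ((u x : EReal) - ⨆ y : 𝒳, ((u y : EReal) - f y)) :=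
  stmt_1_general f hne hconv hlsc x
end

section
/- Let X be a compact metrizable space, T : X → X continuous with finite upper semi-continuous entropy map, and φ ∈ C(X). If a sequence (Ω_n) of Borel probability measures on M(X) satisfies the large deviation principle with rate function I^φ (equal to P(T,φ) − ∫φ dμ − h_μ(T) on invariant μ and +∞ otherwise), then for every ψ ∈ C(X) the limit lim_{n→∞} (1/n) log ∫_{M(X)} exp(n ∫ψ dμ) dΩ_n(μ) exists and equals P(T, φ+ψ) − P(T, φ) (a Varadhan-type necessity of the functional equality). -/
/-!
Varadhan's lemma: for bounded continuous `F`, `(1/n) log ∫ exp (n F) dΩₙ → sup (F - I)`.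
The lower bound localizes the integral on an open neighbourhood of a near-maximizer of
`F - I`; the upper bound cuts the range of `F` into finitely many closed strips, on each of
which the closed-set bound of the LDP applies. For `F μ = ∫ ψ dμ` the variational principle
`P (φ + ψ) = sup_μ (h_μ + ∫ (φ + ψ) dμ)` identifies `sup (F - I)` with `P (φ + ψ) - P φ`.
-/

open MeasureTheory Filter Topology Set
open scoped ENNReal

lemma inv_mul_log_lt_iff {n x : ℝ} (hn : 0 < n) (hx : 0 < x) (b : ℝ) :
    n⁻¹ * Real.log x < b ↔ x < Real.exp (n * b) := by
  rw [inv_mul_lt_iff₀ hn, Real.log_lt_iff_lt_exp hx]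

lemma lt_inv_mul_log_iff {n x : ℝ} (hn : 0 < n) (hx : 0 < x) (b : ℝ) :
    b < n⁻¹ * Real.log x ↔ Real.exp (n * b) < x := by
  rw [lt_inv_mul_iff₀ hn, Real.lt_log_iff_exp_lt hx]

lemma coe_inv_mul_log_lt_coe_iff {n : ℝ} (hn : 0 < n) {x : ℝ≥0∞} (hx : x ≠ ⊤) (s : ℝ) :
    ((n⁻¹ : ℝ) : EReal) * ENNReal.log x < s ↔ x.toReal < Real.exp (n * s) := by
  rcases eq_or_ne x 0 with rfl | hx0
  · rw [ENNReal.log_zero, EReal.mul_bot_of_pos (EReal.coe_pos.2 (inv_pos.2 hn))]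
    simp [Real.exp_pos]
  · rw [ENNReal.log_pos_real hx0 hx, ← EReal.coe_mul, EReal.coe_lt_coe_iff,
      inv_mul_log_lt_iff hn (ENNReal.toReal_pos hx0 hx)]

section LargeDeviations

variable {Y : Type*} [MeasurableSpace Y]

lemma integrable_exp_mul_of_abs_le {ν : Measure Y} [IsFiniteMeasure ν] {F : Y → ℝ}
    (hF : AEStronglyMeasurable F ν) {M : ℝ} (hM : ∀ y, |F y| ≤ M) (t : ℝ) :
    Integrable (fun y => Real.exp (t * F y)) ν := by
  refine Integrable.of_bound (Real.continuous_exp.comp_aestronglyMeasurable (hF.const_mul t))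
    (Real.exp (|t| * M)) (ae_of_all _ fun y => ?_)
  rw [Real.norm_eq_abs, abs_of_pos (Real.exp_pos _), Real.exp_le_exp]
  calc t * F y ≤ |t * F y| := le_abs_self _
    _ = |t| * |F y| := abs_mul _ _
    _ ≤ |t| * M := mul_le_mul_of_nonneg_left (hM y) (abs_nonneg t)

lemma integral_le_sum_mul_measureReal_of_cover {ν : Measure Y} [IsFiniteMeasure ν] {ι : Type*}
    (s : Finset ι) {S : ι → Set Y} (hS : ∀ j ∈ s, MeasurableSet (S j))
    (hcover : ∀ y, ∃ j ∈ s, y ∈ S j) {f : Y → ℝ} (hf : Integrable f ν) (hf0 : 0 ≤ f)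
    {b : ι → ℝ} (hb : ∀ j ∈ s, ∀ y ∈ S j, f y ≤ b j) :
    ∫ y, f y ∂ν ≤ ∑ j ∈ s, b j * ν.real (S j) := by
  have hind : ∀ j ∈ s, Integrable ((S j).indicator fun _ => b j) ν :=
    fun j hj => (integrable_const _).indicator (hS j hj)
  have hpt : ∀ y, f y ≤ ∑ j ∈ s, (S j).indicator (fun _ => b j) y := by
    intro y
    obtain ⟨j, hj, hy⟩ := hcover y
    calc f y ≤ (S j).indicator (fun _ => b j) y := by
          rw [indicator_of_mem hy]; exact hb j hj y hy
      _ ≤ ∑ j ∈ s, (S j).indicator (fun _ => b j) y :=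
          Finset.single_le_sum (f := fun j => (S j).indicator (fun _ => b j) y)
            (fun k _ => indicator_nonneg (fun z hz => (hf0 z).trans (hb k ‹_› z hz)) y) hj
  calc ∫ y, f y ∂ν ≤ ∫ y, ∑ j ∈ s, (S j).indicator (fun _ => b j) y ∂ν :=
        integral_mono hf (integrable_finsetSum _ hind) hpt
    _ = ∑ j ∈ s, b j * ν.real (S j) := by
        rw [integral_finsetSum _ hind]
        refine Finset.sum_congr rfl fun j hj => ?_
        rw [integral_indicator_const _ (hS j hj), smul_eq_mul, mul_comm]

lemma exists_lt_mem_Icc_of_abs_le {x M ε : ℝ} (hε : 0 < ε) (hx : |x| ≤ M) :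
    ∃ j < ⌊2 * M / ε⌋₊ + 1, x ∈ Icc (-M + j * ε) (-M + j * ε + ε) := by
  obtain ⟨hlo, hhi⟩ := abs_le.1 hx
  have ht : 0 ≤ (x + M) / ε := div_nonneg (by linarith) hε.le
  refine ⟨⌊(x + M) / ε⌋₊, Nat.lt_succ_of_le (Nat.floor_mono ?_), ?_, ?_⟩
  · exact div_le_div_of_nonneg_right (by linarith) hε.le
  · have := (le_div_iff₀ hε).1 (Nat.floor_le ht)
    linarith
  · have := (div_lt_iff₀ hε).1 (Nat.lt_floor_add_one ((x + M) / ε))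
    linarith

variable [TopologicalSpace Y]

def LDPUpperBound (Ω : ℕ → Measure Y) (I : Y → EReal) : Prop :=
  ∀ S : Set Y, IsClosed S →
    limsup (fun n : ℕ => ((n : ℝ)⁻¹ : EReal) * ENNReal.log (Ω n S)) atTop ≤ - ⨅ y ∈ S, I y

def LDPLowerBound (Ω : ℕ → Measure Y) (I : Y → EReal) : Prop :=
  ∀ G : Set Y, IsOpen G →
    - ⨅ y ∈ G, I y ≤ liminf (fun n : ℕ => ((n : ℝ)⁻¹ : EReal) * ENNReal.log (Ω n G)) atTop

noncomputable def scaledLogLaplace (Ω : ℕ → Measure Y) (F : Y → ℝ) (n : ℕ) : ℝ :=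
  (n : ℝ)⁻¹ * Real.log (∫ y, Real.exp ((n : ℝ) * F y) ∂(Ω n))

variable {Ω : ℕ → Measure Y} {I : Y → EReal}

lemma eventually_measureReal_lt (hupper : LDPUpperBound Ω I) [∀ n, IsFiniteMeasure (Ω n)]
    {S : Set Y} (hS : IsClosed S) {r : ℝ} (hrS : ∀ y ∈ S, (r : EReal) ≤ I y) {s : ℝ}
    (hs : -r < s) : ∀ᶠ n : ℕ in atTop, (Ω n).real S < Real.exp (n * s) := by
  have hlimsup : limsup (fun n : ℕ => ((n : ℝ)⁻¹ : EReal) * ENNReal.log (Ω n S)) atTop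
      ≤ ((-r : ℝ) : EReal) :=
    (hupper S hS).trans (by rw [EReal.coe_neg, EReal.neg_le_neg_iff]; exact le_iInf₂ hrS)
  filter_upwards [eventually_lt_of_limsup_lt (hlimsup.trans_lt (EReal.coe_lt_coe_iff.2 hs)),
    eventually_gt_atTop 0] with n hn hn0
  exact (coe_inv_mul_log_lt_coe_iff (Nat.cast_pos.2 hn0) (measure_ne_top _ _) s).1 hn

lemma eventually_exp_le_measureReal (hlower : LDPLowerBound Ω I) [∀ n, IsFiniteMeasure (Ω n)]
    {G : Set Y} (hG : IsOpen G) {y : Y} (hy : y ∈ G) {r : ℝ} (hr : I y = r) {s : ℝ}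
    (hs : s < -r) : ∀ᶠ n : ℕ in atTop, Real.exp (n * s) ≤ (Ω n).real G := by
  have hliminf : ((-r : ℝ) : EReal)
      ≤ liminf (fun n : ℕ => ((n : ℝ)⁻¹ : EReal) * ENNReal.log (Ω n G)) atTop := by
    refine le_trans ?_ (hlower G hG)
    rw [EReal.coe_neg, ← hr]
    exact EReal.neg_le_neg_iff.2 (iInf₂_le y hy)
  filter_upwards [eventually_lt_of_lt_liminf ((EReal.coe_lt_coe_iff.2 hs).trans_le hliminf),
    eventually_gt_atTop 0] with n hn hn0
  exact not_lt.1 fun h =>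
    hn.not_gt ((coe_inv_mul_log_lt_coe_iff (Nat.cast_pos.2 hn0) (measure_ne_top _ _) s).2 h)

variable [OpensMeasurableSpace Y] [∀ n, IsProbabilityMeasure (Ω n)] {F : Y → ℝ} {M : ℝ}

lemma eventually_lt_scaledLogLaplace (hlower : LDPLowerBound Ω I) (hF : Continuous F)
    (hM : ∀ y, |F y| ≤ M) {y : Y} {r : ℝ} (hr : I y = r) {b : ℝ} (hb : b < F y - r) :
    ∀ᶠ n in atTop, b < scaledLogLaplace Ω F n := by
  set δ := (F y - r - b) / 3
  set G := F ⁻¹' Ioi (F y - δ)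
  have hyG : y ∈ G := show F y - δ < F y by simp only [δ]; linarith
  filter_upwards [eventually_exp_le_measureReal hlower (isOpen_Ioi.preimage hF) hyG hr
    (s := -r - δ) (by simp only [δ]; linarith), eventually_gt_atTop 0] with n hmass hn
  have hn' : (0 : ℝ) < n := Nat.cast_pos.2 hn
  have hint := integrable_exp_mul_of_abs_le (ν := Ω n) hF.aestronglyMeasurable hM n
  rw [scaledLogLaplace, lt_inv_mul_log_iff hn' (integral_exp_pos hint)]
  have hGsub : G ⊆ {z | Real.exp (n * (F y - δ)) ≤ Real.exp (n * F z)} :=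
    fun z hz => Real.exp_le_exp.2 (mul_le_mul_of_nonneg_left (le_of_lt hz) hn'.le)
  calc Real.exp (n * b) < Real.exp (n * (F y - δ)) * Real.exp (n * (-r - δ)) := by
        rw [← Real.exp_add, ← mul_add, Real.exp_lt_exp]
        exact mul_lt_mul_of_pos_left (by simp only [δ]; linarith) hn'
    _ ≤ Real.exp (n * (F y - δ)) * (Ω n).real G :=
        mul_le_mul_of_nonneg_left hmass (Real.exp_pos _).le
    _ ≤ Real.exp (n * (F y - δ)) *
          (Ω n).real {z | Real.exp (n * (F y - δ)) ≤ Real.exp (n * F z)} :=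
        mul_le_mul_of_nonneg_left (measureReal_mono hGsub) (Real.exp_pos _).le
    _ ≤ ∫ z, Real.exp (n * F z) ∂(Ω n) :=
        mul_meas_ge_le_integral_of_nonneg (ae_of_all _ fun _ => (Real.exp_pos _).le) hint _

/-- The range `[-M, M]` of `F` is cut into `K` strips of width `ε`; on the `j`-th strip the
integrand is at most `exp (n (c_j + ε))` and its mass at most `exp (n (L - c_j + ε))`. -/
lemma eventually_scaledLogLaplace_lt (hupper : LDPUpperBound Ω I) (hF : Continuous F)
    (hM : ∀ y, |F y| ≤ M) {L : ℝ} (hI : ∀ y, ((F y - L : ℝ) : EReal) ≤ I y) {b : ℝ}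
    (hb : L < b) : ∀ᶠ n in atTop, scaledLogLaplace Ω F n < b := by
  set ε := (b - L) / 4
  have hε : 0 < ε := by simp only [ε]; linarith
  set K := ⌊2 * M / ε⌋₊ + 1
  set c : ℕ → ℝ := fun j => -M + j * ε
  set S : ℕ → Set Y := fun j => F ⁻¹' Icc (c j) (c j + ε)
  have hS : ∀ j, IsClosed (S j) := fun j => isClosed_Icc.preimage hF
  have hmass : ∀ j ∈ Finset.range K,
      ∀ᶠ n : ℕ in atTop, (Ω n).real (S j) < Real.exp (n * (L - c j + ε)) :=
    fun j _ => eventually_measureReal_lt hupper (hS j) (r := c j - L)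
      (fun y hy => (EReal.coe_le_coe_iff.2 (by linarith [hy.1])).trans (hI y)) (by linarith)
  have hK : ∀ᶠ n : ℕ in atTop, (K : ℝ) < Real.exp (n * ε) :=
    (Real.tendsto_exp_atTop.comp
      (tendsto_natCast_atTop_atTop.atTop_mul_const hε)).eventually_gt_atTop _
  filter_upwards [(Filter.eventually_all_finset _).2 hmass, hK, eventually_gt_atTop 0]
    with n hmass hK hn
  have hn' : (0 : ℝ) < n := Nat.cast_pos.2 hn
  have hint := integrable_exp_mul_of_abs_le (ν := Ω n) hF.aestronglyMeasurable hM n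
  rw [scaledLogLaplace, inv_mul_log_lt_iff hn' (integral_exp_pos hint)]
  calc ∫ y, Real.exp (n * F y) ∂(Ω n)
      ≤ ∑ j ∈ Finset.range K, Real.exp (n * (c j + ε)) * (Ω n).real (S j) := by
        refine integral_le_sum_mul_measureReal_of_cover _ (fun j _ => (hS j).measurableSet)
          (fun y => ?_) hint (fun _ => (Real.exp_pos _).le)
          (fun j _ y hy => Real.exp_le_exp.2 (mul_le_mul_of_nonneg_left hy.2 hn'.le))
        obtain ⟨j, hj, hy⟩ := exists_lt_mem_Icc_of_abs_le hε (hM y)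
        exact ⟨j, Finset.mem_range.2 hj, hy⟩
    _ ≤ ∑ _j ∈ Finset.range K, Real.exp (n * (L + 2 * ε)) := by
        refine Finset.sum_le_sum fun j hj => ?_
        calc Real.exp (n * (c j + ε)) * (Ω n).real (S j)
            ≤ Real.exp (n * (c j + ε)) * Real.exp (n * (L - c j + ε)) :=
              mul_le_mul_of_nonneg_left (hmass j hj).le (Real.exp_pos _).le
          _ = Real.exp (n * (L + 2 * ε)) := by rw [← Real.exp_add]; ring_nf
    _ = K * Real.exp (n * (L + 2 * ε)) := by simp
    _ < Real.exp (n * ε) * Real.exp (n * (L + 2 * ε)) :=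
        mul_lt_mul_of_pos_right hK (Real.exp_pos _)
    _ ≤ Real.exp (n * b) := by
        rw [← Real.exp_add, ← mul_add, Real.exp_le_exp]
        exact mul_le_mul_of_nonneg_left (by simp only [ε]; linarith) hn'.le

theorem tendsto_scaledLogLaplace (hupper : LDPUpperBound Ω I) (hlower : LDPLowerBound Ω I)
    (hF : Continuous F) (hM : ∀ y, |F y| ≤ M) {L : ℝ}
    (hI : ∀ y, ((F y - L : ℝ) : EReal) ≤ I y)
    (hL : ∀ b < L, ∃ y, ∃ r : ℝ, I y = r ∧ b < F y - r) :
    Tendsto (scaledLogLaplace Ω F) atTop (𝓝 L) := by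
  refine tendsto_order.2
    ⟨fun b hb => ?_, fun b hb => eventually_scaledLogLaplace_lt hupper hF hM hI hb⟩
  obtain ⟨y, r, hr, hby⟩ := hL b hb
  exact eventually_lt_scaledLogLaplace hlower hF hM hr hby

end LargeDeviations

theorem stmt_18_general {X : Type*} [MetricSpace X] [CompactSpace X] [MeasurableSpace X]
    [BorelSpace X]
    [MeasurableSpace (ProbabilityMeasure X)] [BorelSpace (ProbabilityMeasure X)]
    (T : X → X)
    (hent : ProbabilityMeasure X → ℝ)
    (P : C(X, ℝ) → ℝ)
    (hP : ∀ χ : C(X, ℝ), IsLUB {r : ℝ | ∃ μ : ProbabilityMeasure X,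
        (μ : Measure X).map T = (μ : Measure X) ∧
        r = hent μ + ∫ x, χ x ∂(μ : Measure X)} (P χ))
    (φ : C(X, ℝ))
    (I : ProbabilityMeasure X → EReal)
    (hI1 : ∀ μ : ProbabilityMeasure X, (μ : Measure X).map T = (μ : Measure X) →
      I μ = ((P φ - ∫ x, φ x ∂(μ : Measure X) - hent μ : ℝ) : EReal))
    (hI2 : ∀ μ : ProbabilityMeasure X, ¬ (μ : Measure X).map T = (μ : Measure X) →
      I μ = ⊤)
    (Ω : ℕ → Measure (ProbabilityMeasure X)) (hΩ : ∀ n, IsProbabilityMeasure (Ω n))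
    (hupper : ∀ F : Set (ProbabilityMeasure X), IsClosed F →
      Filter.limsup (fun n : ℕ => ((n : ℝ)⁻¹ : EReal) * ENNReal.log (Ω n F))
        Filter.atTop ≤ - ⨅ μ ∈ F, I μ)
    (hlower : ∀ G : Set (ProbabilityMeasure X), IsOpen G →
      - ⨅ μ ∈ G, I μ ≤
        Filter.liminf (fun n : ℕ => ((n : ℝ)⁻¹ : EReal) * ENNReal.log (Ω n G))
          Filter.atTop) :
    ∀ ψ : C(X, ℝ),
      Filter.Tendsto
        (fun n : ℕ => (n : ℝ)⁻¹ * Real.log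
          (∫ μ : ProbabilityMeasure X,
            Real.exp ((n : ℝ) * ∫ x, ψ x ∂(μ : Measure X)) ∂(Ω n)))
        Filter.atTop (𝓝 (P (φ + ψ) - P φ)) := by
  intro ψ
  have := hΩ
  set ψb := BoundedContinuousFunction.mkOfCompact ψ
  have hψ : ∀ μ : ProbabilityMeasure X, |∫ x, ψ x ∂(μ : Measure X)| ≤ ‖ψb‖ :=
    fun μ => ψb.norm_integral_le_norm _
  have hint : ∀ μ : ProbabilityMeasure X, ∫ x, (φ + ψ) x ∂(μ : Measure X)
      = ∫ x, φ x ∂(μ : Measure X) + ∫ x, ψ x ∂(μ : Measure X) := fun μ =>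
    integral_add ((BoundedContinuousFunction.mkOfCompact φ).integrable _) (ψb.integrable _)
  refine tendsto_scaledLogLaplace (F := fun μ : ProbabilityMeasure X => ∫ x, ψ x ∂(μ : Measure X))
    hupper hlower (ProbabilityMeasure.continuous_integral_boundedContinuousFunction ψb) hψ
    (fun μ => ?_) (fun b hb => ?_)
  · by_cases hμ : (μ : Measure X).map T = (μ : Measure X)
    · have hvar := (hP (φ + ψ)).1 ⟨μ, hμ, rfl⟩
      rw [hI1 μ hμ, EReal.coe_le_coe_iff]
      rw [hint] at hvar
      linarith
    · rw [hI2 μ hμ]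
      exact le_top
  · obtain ⟨_, ⟨μ, hμ, rfl⟩, hlt⟩ :=
      (lt_isLUB_iff (hP (φ + ψ))).1 (show b + P φ < P (φ + ψ) by linarith)
    refine ⟨μ, _, hI1 μ hμ, ?_⟩
    rw [hint] at hlt
    linarith

/-- (Varadhan-type necessity.) If a sequence `(Ω_n)` of Borel
probability measures on the space `M(X)` of Borel probability measures satisfies the
large deviation principle at speed `n` with rate function `I^φ` (equal to
`P(T,φ) − ∫φ dμ − h_μ(T)` on invariant `μ` and `+∞` otherwise), then for every
`ψ ∈ C(X)` the limit `(1/n) log ∫ exp(n ∫ψ dμ) dΩ_n(μ)` exists and equals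
`P(T,φ+ψ) − P(T,φ)`. -/
theorem stmt_18 {X : Type*} [MetricSpace X] [CompactSpace X] [MeasurableSpace X]
    [BorelSpace X]
    [MeasurableSpace (ProbabilityMeasure X)] [BorelSpace (ProbabilityMeasure X)]
    (T : X → X) (hT : Continuous T)
    (hent : ProbabilityMeasure X → ℝ)
    (hent_usc : UpperSemicontinuousOn hent
      {μ : ProbabilityMeasure X | (μ : Measure X).map T = (μ : Measure X)})
    (P : C(X, ℝ) → ℝ)
    (hP : ∀ χ : C(X, ℝ), IsLUB {r : ℝ | ∃ μ : ProbabilityMeasure X,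
        (μ : Measure X).map T = (μ : Measure X) ∧
        r = hent μ + ∫ x, χ x ∂(μ : Measure X)} (P χ))
    (φ : C(X, ℝ))
    (I : ProbabilityMeasure X → EReal)
    (hI1 : ∀ μ : ProbabilityMeasure X, (μ : Measure X).map T = (μ : Measure X) →
      I μ = ((P φ - ∫ x, φ x ∂(μ : Measure X) - hent μ : ℝ) : EReal))
    (hI2 : ∀ μ : ProbabilityMeasure X, ¬ (μ : Measure X).map T = (μ : Measure X) →
      I μ = ⊤)
    (Ω : ℕ → Measure (ProbabilityMeasure X)) (hΩ : ∀ n, IsProbabilityMeasure (Ω n))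
    (hupper : ∀ F : Set (ProbabilityMeasure X), IsClosed F →
      Filter.limsup (fun n : ℕ => ((n : ℝ)⁻¹ : EReal) * ENNReal.log (Ω n F))
        Filter.atTop ≤ - ⨅ μ ∈ F, I μ)
    (hlower : ∀ G : Set (ProbabilityMeasure X), IsOpen G →
      - ⨅ μ ∈ G, I μ ≤
        Filter.liminf (fun n : ℕ => ((n : ℝ)⁻¹ : EReal) * ENNReal.log (Ω n G))
          Filter.atTop) :
    ∀ ψ : C(X, ℝ),
      Filter.Tendsto
        (fun n : ℕ => (n : ℝ)⁻¹ * Real.log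
          (∫ μ : ProbabilityMeasure X,
            Real.exp ((n : ℝ) * ∫ x, ψ x ∂(μ : Measure X)) ∂(Ω n)))
        Filter.atTop (𝓝 (P (φ + ψ) - P φ)) :=
  stmt_18_general T hent P hP φ I hI1 hI2 Ω hΩ hupper hlower
end
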